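/- arXiv:2106.08480 — 5 statements merged into one kernel-verified Lean document; each statement's English description precedes it below -/
import Mathlib

section
/- Let ψ₀(x₁,x₂,x₃) = exp(−(x₁²+x₂²+x₃²)/2) and let ψ = ψ₀·(1,−1,−1,−1)ᵗ : ℝ³ → ℂ⁴. Then F* ψ = 0, where F* = H₂ + i x₃ and H₂ = σ₁⊗(D₁σ₁ + D₂σ₂ + D₃σ₃) + x₁·σ₂⊗I₂ + x₂·σ₃⊗I₂ with D_j = −i∂_j (Kronecker products of 2×2 matrices giving 4×4 matrix coefficients). -/
open Matrix Kronecker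

/-- The first Pauli matrix. -/
noncomputable def pauli1 : Matrix (Fin 2) (Fin 2) ℂ := !![0, 1; 1, 0]

/-- The second Pauli matrix. -/
noncomputable def pauli2 : Matrix (Fin 2) (Fin 2) ℂ := !![0, -Complex.I; Complex.I, 0]

/-- The third Pauli matrix. -/
noncomputable def pauli3 : Matrix (Fin 2) (Fin 2) ℂ := !![1, 0; 0, -1]

/-- The Gaussian spinor `ψ = e^{-|x|²/2} (1,-1,-1,-1)ᵗ : ℝ³ → ℂ⁴`. -/
noncomputable def gaussSpinor (x₁ x₂ x₃ : ℝ) : Fin 2 × Fin 2 → ℂ :=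
  fun i => Complex.exp (-((x₁ : ℂ) ^ 2 + (x₂ : ℂ) ^ 2 + (x₃ : ℂ) ^ 2) / 2) *
    (if i = ((0 : Fin 2), (0 : Fin 2)) then 1 else -1)

/-!
Every first-order term of `F*` acts on the Gaussian `e^{-|x|²/2}` as multiplication by a
coordinate, since `-i ∂ⱼ e^{-|x|²/2} = i xⱼ e^{-|x|²/2}`. Hence `F* ψ = 0` reduces to three
algebraic identities on the constant spinor `v = (1,-1,-1,-1)ᵗ`, one for each coordinate:
`i (σ₁⊗σ₁) v + (σ₂⊗I) v = 0`, `i (σ₁⊗σ₂) v + (σ₃⊗I) v = 0` and `(σ₁⊗σ₃) v + v = 0`.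
-/

open Complex

theorem hasDerivAt_cexp_neg_sq_add_div_two (c : ℂ) (x : ℝ) :
    HasDerivAt (fun t : ℝ => cexp (-((t : ℂ) ^ 2 + c) / 2))
      (-x * cexp (-((x : ℂ) ^ 2 + c) / 2)) x := by
  have hsq : HasDerivAt (fun t : ℝ => (t : ℂ) ^ 2 + c) (2 * x) x := by
    simpa using ((hasDerivAt_id (x : ℂ)).pow 2).comp_ofReal.add_const c
  have h := (hsq.neg.div_const 2).cexp
  simp only [Pi.neg_apply] at h
  convert h using 1
  ring

theorem deriv_cexp_neg_sq_add_div_two_mul (c s : ℂ) (x : ℝ) :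
    deriv (fun t : ℝ => cexp (-((t : ℂ) ^ 2 + c) / 2) * s) x
      = -x * (cexp (-((x : ℂ) ^ 2 + c) / 2) * s) := by
  rw [((hasDerivAt_cexp_neg_sq_add_div_two c x).mul_const s).deriv, mul_assoc]

noncomputable def signSpinor : Fin 2 × Fin 2 → ℂ :=
  fun i => if i = ((0 : Fin 2), (0 : Fin 2)) then 1 else -1

theorem gaussSpinor_eq_smul (x₁ x₂ x₃ : ℝ) :
    gaussSpinor x₁ x₂ x₃
      = cexp (-((x₁ : ℂ) ^ 2 + (x₂ : ℂ) ^ 2 + (x₃ : ℂ) ^ 2) / 2) • signSpinor :=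
  rfl

section Derivatives

variable (x₁ x₂ x₃ : ℝ) (i : Fin 2 × Fin 2)

theorem deriv_gaussSpinor_fst :
    deriv (fun t : ℝ => gaussSpinor t x₂ x₃ i) x₁ = -x₁ * gaussSpinor x₁ x₂ x₃ i := by
  simp only [gaussSpinor_eq_smul, Pi.smul_apply, smul_eq_mul, add_assoc]
  exact deriv_cexp_neg_sq_add_div_two_mul _ _ _

theorem deriv_gaussSpinor_snd :
    deriv (fun t : ℝ => gaussSpinor x₁ t x₃ i) x₂ = -x₂ * gaussSpinor x₁ x₂ x₃ i := by
  have h (t : ℝ) : (x₁ : ℂ) ^ 2 + (t : ℂ) ^ 2 + (x₃ : ℂ) ^ 2 = t ^ 2 + (x₁ ^ 2 + x₃ ^ 2) := by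
    ring
  simp only [gaussSpinor_eq_smul, Pi.smul_apply, smul_eq_mul, h]
  exact deriv_cexp_neg_sq_add_div_two_mul _ _ _

theorem deriv_gaussSpinor_thd :
    deriv (fun t : ℝ => gaussSpinor x₁ x₂ t i) x₃ = -x₃ * gaussSpinor x₁ x₂ x₃ i := by
  have h (t : ℝ) : (x₁ : ℂ) ^ 2 + (x₂ : ℂ) ^ 2 + (t : ℂ) ^ 2 = t ^ 2 + (x₁ ^ 2 + x₂ ^ 2) := by
    ring
  simp only [gaussSpinor_eq_smul, Pi.smul_apply, smul_eq_mul, h]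
  exact deriv_cexp_neg_sq_add_div_two_mul _ _ _

end Derivatives

theorem pauli2_kronecker_one_mulVec_signSpinor :
    (pauli2 ⊗ₖ (1 : Matrix (Fin 2) (Fin 2) ℂ)) *ᵥ signSpinor
      = -I • (pauli1 ⊗ₖ pauli1) *ᵥ signSpinor := by
  ext ⟨a, b⟩
  fin_cases a <;> fin_cases b <;>
    simp [mulVec, dotProduct, Fintype.sum_prod_type, pauli1, pauli2, signSpinor, one_apply]

theorem pauli3_kronecker_one_mulVec_signSpinor :
    (pauli3 ⊗ₖ (1 : Matrix (Fin 2) (Fin 2) ℂ)) *ᵥ signSpinor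
      = -I • (pauli1 ⊗ₖ pauli2) *ᵥ signSpinor := by
  ext ⟨a, b⟩
  fin_cases a <;> fin_cases b <;>
    simp [mulVec, dotProduct, Fintype.sum_prod_type, pauli1, pauli2, pauli3, signSpinor, one_apply]

theorem pauli1_kronecker_pauli3_mulVec_signSpinor :
    (pauli1 ⊗ₖ pauli3) *ᵥ signSpinor = -signSpinor := by
  ext ⟨a, b⟩
  fin_cases a <;> fin_cases b <;>
    simp [mulVec, dotProduct, Fintype.sum_prod_type, pauli1, pauli3, signSpinor]

/-- `F* ψ = 0` where `F* = H₂ + i x₃` and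
`H₂ = σ₁⊗(D₁σ₁ + D₂σ₂ + D₃σ₃) + x₁ σ₂⊗I₂ + x₂ σ₃⊗I₂`, with `D_j = -i ∂_j`. -/
theorem stmt_3 :
    ∀ x₁ x₂ x₃ : ℝ,
      (pauli1 ⊗ₖ pauli1).mulVec
          (fun i => -Complex.I * deriv (fun t : ℝ => gaussSpinor t x₂ x₃ i) x₁)
        + (pauli1 ⊗ₖ pauli2).mulVec
            (fun i => -Complex.I * deriv (fun t : ℝ => gaussSpinor x₁ t x₃ i) x₂)
        + (pauli1 ⊗ₖ pauli3).mulVec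
            (fun i => -Complex.I * deriv (fun t : ℝ => gaussSpinor x₁ x₂ t i) x₃)
        + (x₁ : ℂ) • (pauli2 ⊗ₖ (1 : Matrix (Fin 2) (Fin 2) ℂ)).mulVec (gaussSpinor x₁ x₂ x₃)
        + (x₂ : ℂ) • (pauli3 ⊗ₖ (1 : Matrix (Fin 2) (Fin 2) ℂ)).mulVec (gaussSpinor x₁ x₂ x₃)
        + (Complex.I * (x₃ : ℂ)) • gaussSpinor x₁ x₂ x₃ = 0 := by
  intro x₁ x₂ x₃
  have momentum (x : ℝ) (ψ : Fin 2 × Fin 2 → ℂ) :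
      (fun i => -I * (-(x : ℂ) * ψ i)) = (I * x) • ψ := by
    funext i
    simp only [Pi.smul_apply, smul_eq_mul]
    ring
  simp only [deriv_gaussSpinor_fst, deriv_gaussSpinor_snd, deriv_gaussSpinor_thd, momentum]
  rw [gaussSpinor_eq_smul]
  simp only [mulVec_smul, pauli2_kronecker_one_mulVec_signSpinor,
    pauli3_kronecker_one_mulVec_signSpinor, pauli1_kronecker_pauli3_mulVec_signSpinor]
  module
end

section
/- Let κ ≥ 1, n = 2^κ, and let γ⁰, γ¹, …, γ^{2κ} ∈ M_n(ℂ) be Hermitian matrices satisfying γᵃγᵇ + γᵇγᵃ = 2δ_{ab} Iₙ for all a, b ∈ {0, 1, …, 2κ} and the orientation condition γ¹γ²⋯γ^{2κ}γ⁰ = i^κ Iₙ. Then for every function j : {1, …, 2κ} → {1, …, 2κ}: the trace tr(γ⁰ γ^{j(1)} γ^{j(2)} ⋯ γ^{j(2κ)}) equals 0 if j is not a bijection, and equals (2i)^κ · sgn(j) if j is a permutation of {1, …, 2κ} with signature sgn(j). -/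
/-!
Distinct generators anticommute, so reordering the factors of `γ¹ ⋯ γ^{2κ}` by a permutation `σ`
multiplies the product by `sgn σ`; by the orientation condition that product is `i^κ γ⁰`, and
`tr (γ⁰ γ⁰) = 2^κ`. If `j` misses an index `c`, then `γ^c` anticommutes with each of the `2κ + 1`
factors of `γ⁰ γ^{j(1)} ⋯ γ^{j(2κ)}`, hence with the product; conjugation by the involution `γ^c`
then negates this matrix without changing its trace, so the trace is zero.
-/

open Equiv

section Anticommuting

variable {α R : Type*} [Ring R]

theorem List.mul_prod_of_forall_anticomm {v : R} {l : List R}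
    (h : ∀ w ∈ l, v * w = -(w * v)) : v * l.prod = (-1) ^ l.length * l.prod * v := by
  induction l with
  | nil => simp
  | cons w t ih =>
    rw [forall_mem_cons] at h
    rw [prod_cons, ← mul_assoc, h.1, neg_mul, mul_assoc, ih h.2]
    simp only [mul_assoc, ((Commute.neg_one_right w).pow_right t.length).left_comm,
      length_cons, pow_succ, neg_mul, mul_neg, one_mul]

variable [DecidableEq α] {f : α → R}

section Swap

variable (hf : Pairwise fun a b => f a * f b = -(f b * f a))
include hf

theorem mul_prod_map_swap_of_anticomm {x y : α} (hxy : x ≠ y) {l : List α} (hl : l.Nodup)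
    (hx : x ∉ l) (hy : y ∈ l) :
    f y * (l.map (f ∘ swap x y)).prod = -(f x * (l.map f).prod) := by
  induction l with
  | nil => simp at hy
  | cons b t ih =>
    rw [List.nodup_cons] at hl
    rw [List.mem_cons, not_or] at hx
    simp only [List.map_cons, List.prod_cons, Function.comp_apply]
    rcases eq_or_ne b y with rfl | hby
    · have hfix : ∀ a ∈ t, (f ∘ swap x b) a = f a := fun a ha =>
        congrArg f (swap_apply_of_ne_of_ne (fun h => hx.2 (h ▸ ha)) (fun h => hl.1 (h ▸ ha)))
      rw [swap_apply_right, List.map_congr_left hfix, ← mul_assoc, hf hxy.symm]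
      noncomm_ring
    · have hy' : y ∈ t := (List.mem_cons.mp hy).resolve_left hby.symm
      rw [swap_apply_of_ne_of_ne (Ne.symm hx.1) hby, ← mul_assoc, hf hby.symm, neg_mul, mul_assoc,
        ih hl.2 hx.2 hy', ← mul_assoc (f x), hf hx.1]
      noncomm_ring

theorem prod_map_swap_of_anticomm {x y : α} (hxy : x ≠ y) {l : List α} (hl : l.Nodup)
    (hx : x ∈ l) (hy : y ∈ l) : (l.map (f ∘ swap x y)).prod = -(l.map f).prod := by
  induction l with
  | nil => simp at hx
  | cons a t ih =>
    rw [List.nodup_cons] at hl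
    simp only [List.map_cons, List.prod_cons, Function.comp_apply]
    rcases eq_or_ne a x with rfl | hax
    · rw [swap_apply_left, mul_prod_map_swap_of_anticomm hf hxy hl.2 hl.1
        ((List.mem_cons.mp hy).resolve_left hxy.symm)]
    rcases eq_or_ne a y with rfl | hay
    · rw [swap_comm, swap_apply_left, mul_prod_map_swap_of_anticomm hf hxy.symm hl.2 hl.1
        ((List.mem_cons.mp hx).resolve_left hxy)]
    · rw [swap_apply_of_ne_of_ne hax hay, ih hl.2 ((List.mem_cons.mp hx).resolve_left hax.symm)
        ((List.mem_cons.mp hy).resolve_left hay.symm), mul_neg]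

end Swap

theorem prod_map_perm_of_anticomm [Fintype α] {l : List α} (hl : l.Nodup) (hmem : ∀ a, a ∈ l)
    (hf : Pairwise fun a b => f a * f b = -(f b * f a)) (σ : Perm α) :
    (l.map (f ∘ σ)).prod = Perm.sign σ • (l.map f).prod := by
  induction σ using Perm.swap_induction_on' generalizing f with
  | one => simp
  | mul_swap τ x y hxy ih =>
    rw [Perm.coe_mul, ← Function.comp_assoc, prod_map_swap_of_anticomm (f := f ∘ τ)
      (hf.comp_of_injective τ.injective) hxy hl (hmem x) (hmem y), ih hf, Perm.sign_mul,
      Perm.sign_swap hxy, mul_neg_one, Units.neg_smul]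

end Anticommuting

namespace Matrix

variable {n R : Type*} [Fintype n] [DecidableEq n] [CommRing R] [IsAddTorsionFree R]

theorem trace_eq_zero_of_isUnit_of_anticomm {u X : Matrix n n R} (hu : IsUnit u)
    (h : u * X = -(X * u)) : X.trace = 0 := by
  obtain ⟨u, rfl⟩ := hu
  have hconj : u * X * (↑u⁻¹ : Matrix n n R) = -X := by
    rw [h, neg_mul, mul_assoc, Units.mul_inv, mul_one]
  rw [← self_eq_neg, ← trace_neg, ← hconj, trace_mul_cycle, Units.inv_mul, one_mul]

theorem trace_mul_prod_eq_zero_of_anticomm {u A : Matrix n n R} {l : List (Matrix n n R)}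
    (hu : IsUnit u) (hA : u * A = -(A * u)) (hl : ∀ w ∈ l, u * w = -(w * u))
    (heven : Even l.length) : (A * l.prod).trace = 0 := by
  refine trace_eq_zero_of_isUnit_of_anticomm hu ?_
  rw [← mul_assoc, hA, neg_mul, mul_assoc, List.mul_prod_of_forall_anticomm hl,
    heven.neg_one_pow, one_mul, mul_assoc]

end Matrix

theorem stmt_6_general (κ : ℕ)
    (γ0 : Matrix (Fin (2 ^ κ)) (Fin (2 ^ κ)) ℂ)
    (γ : Fin (2 * κ) → Matrix (Fin (2 ^ κ)) (Fin (2 ^ κ)) ℂ)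
    (hcl : ∀ a b, γ a * γ b + γ b * γ a =
      if a = b then (2 : ℂ) • (1 : Matrix (Fin (2 ^ κ)) (Fin (2 ^ κ)) ℂ) else 0)
    (hcl0 : ∀ a, γ0 * γ a + γ a * γ0 = 0)
    (hsq0 : γ0 * γ0 = 1)
    (horient : ((List.finRange (2 * κ)).map γ).prod * γ0 =
      Complex.I ^ κ • (1 : Matrix (Fin (2 ^ κ)) (Fin (2 ^ κ)) ℂ)) :
    ∀ j : Fin (2 * κ) → Fin (2 * κ),
      Matrix.trace (γ0 * ((List.finRange (2 * κ)).map (fun t => γ (j t))).prod) =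
        if hb : Function.Bijective j then
          (2 * Complex.I) ^ κ * ((Equiv.Perm.sign (Equiv.ofBijective j hb) : ℤ) : ℂ)
        else 0 := by
  intro j
  have hanti : Pairwise fun a b => γ a * γ b = -(γ b * γ a) := fun a b hab =>
    eq_neg_of_add_eq_zero_left (by simpa [hab] using hcl a b)
  split_ifs with hb
  · have hprod : ((List.finRange (2 * κ)).map γ).prod = Complex.I ^ κ • γ0 := by
      rw [← mul_one (List.prod _), ← hsq0, ← mul_assoc, horient, smul_mul_assoc, one_mul]
    rw [show (fun t => γ (j t)) = γ ∘ Equiv.ofBijective j hb from rfl,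
      prod_map_perm_of_anticomm (List.nodup_finRange _) List.mem_finRange hanti, hprod,
      mul_smul_comm, mul_smul_comm, hsq0, Matrix.trace_smul, Matrix.trace_smul,
      Matrix.trace_one, Fintype.card_fin, Units.smul_def, zsmul_eq_mul, smul_eq_mul]
    push_cast
    ring
  · obtain ⟨c, hc⟩ : ∃ c, ∀ t, j t ≠ c := by
      simpa [Function.Surjective] using mt Finite.surjective_iff_bijective.mp hb
    have hsq : γ c * γ c = 1 := by
      have := hcl c c
      rw [if_pos rfl, ← two_smul ℂ] at this
      exact smul_right_injective _ two_ne_zero this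
    refine Matrix.trace_mul_prod_eq_zero_of_anticomm (.of_mul_eq_one _ hsq)
      (eq_neg_of_add_eq_zero_right (hcl0 c)) ?_ (by simp)
    simpa using fun t => hanti (hc t).symm

/-- trace identity for an oriented Hermitian Clifford family with
chirality element `γ⁰`: `tr(γ⁰ γ^{j(1)} ⋯ γ^{j(2κ)})` vanishes unless `j` is a
permutation, in which case it equals `(2i)^κ sgn(j)`. -/
theorem stmt_6 (κ : ℕ) (hκ : 1 ≤ κ)
    (γ0 : Matrix (Fin (2 ^ κ)) (Fin (2 ^ κ)) ℂ)
    (γ : Fin (2 * κ) → Matrix (Fin (2 ^ κ)) (Fin (2 ^ κ)) ℂ)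
    (hherm0 : γ0.IsHermitian) (hherm : ∀ a, (γ a).IsHermitian)
    (hcl : ∀ a b, γ a * γ b + γ b * γ a =
      if a = b then (2 : ℂ) • (1 : Matrix (Fin (2 ^ κ)) (Fin (2 ^ κ)) ℂ) else 0)
    (hcl0 : ∀ a, γ0 * γ a + γ a * γ0 = 0)
    (hsq0 : γ0 * γ0 = 1)
    (horient : ((List.finRange (2 * κ)).map γ).prod * γ0 =
      Complex.I ^ κ • (1 : Matrix (Fin (2 ^ κ)) (Fin (2 ^ κ)) ℂ)) :
    ∀ j : Fin (2 * κ) → Fin (2 * κ),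
      Matrix.trace (γ0 * ((List.finRange (2 * κ)).map (fun t => γ (j t))).prod) =
        if hb : Function.Bijective j then
          (2 * Complex.I) ^ κ * ((Equiv.Perm.sign (Equiv.ofBijective j hb) : ℤ) : ℂ)
        else 0 :=
  stmt_6_general κ γ0 γ hcl hcl0 hsq0 horient
end

section
/- Let f : ℝᵐ → ℝᵐ and g : ℝⁿ → ℝⁿ be maps whose zero sets f⁻¹({0}) and g⁻¹({0}) are finite, with f (resp. g) differentiable at each of its zeros with invertible derivative there. Define F : ℝᵐ × ℝⁿ → ℝᵐ × ℝⁿ by F(x, y) = (f(x), g(y)). Then F⁻¹({0}) = f⁻¹({0}) × g⁻¹({0}) is finite, F is differentiable at each of its zeros with invertible derivative, and Σ_{z ∈ F⁻¹({0})} sign(det DF(z)) = (Σ_{x ∈ f⁻¹({0})} sign(det Df(x))) · (Σ_{y ∈ g⁻¹({0})} sign(det Dg(y))). -/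
/-! At a zero `(x, y)` of `(f, g)` the derivative is block diagonal, so its determinant is
`det Df(x) · det Dg(y)`; as `sign` is multiplicative, the signed count over the product of the zero
sets factors. -/

open Set

theorem Real.sign_mul (x y : ℝ) : Real.sign (x * y) = Real.sign x * Real.sign y := by
  rcases lt_trichotomy x 0 with hx | rfl | hx <;> rcases lt_trichotomy y 0 with hy | rfl | hy <;>
    simp [Real.sign_of_neg, Real.sign_of_pos, mul_pos_of_neg_of_neg, mul_neg_of_neg_of_pos,
      mul_neg_of_pos_of_neg, *]

theorem finsum_mem_mul_finsum_mem {α β R : Type*} [CommSemiring R] {s : Set α} {t : Set β}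
    (hs : s.Finite) (ht : t.Finite) (f : α → R) (g : β → R) :
    (∑ᶠ x ∈ s, f x) * (∑ᶠ y ∈ t, g y) = ∑ᶠ z ∈ s ×ˢ t, f z.1 * g z.2 := by
  rw [finsum_mem_eq_finite_toFinset_sum _ hs, finsum_mem_eq_finite_toFinset_sum _ ht,
    finsum_mem_eq_finite_toFinset_sum _ (hs.prod ht), ← Finite.toFinset_prod,
    Finset.sum_product, Finset.sum_mul_sum]

theorem Set.preimage_prodMap_zero {α β γ δ : Type*} [Zero γ] [Zero δ] (f : α → γ) (g : β → δ) :
    Prod.map f g ⁻¹' {0} = (f ⁻¹' {0}) ×ˢ (g ⁻¹' {0}) := by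
  rw [← Prod.mk_zero_zero, ← singleton_prod_singleton, preimage_prod_map_prod]

def HasRegularZeros {E : Type*} [NormedAddCommGroup E] [NormedSpace ℝ E] (f : E → E) : Prop :=
  ∀ x ∈ f ⁻¹' {0}, DifferentiableAt ℝ f x ∧ (fderiv ℝ f x).det ≠ 0

section ProductMap

variable {E F : Type*} [NormedAddCommGroup E] [NormedSpace ℝ E] [FiniteDimensional ℝ E]
  [NormedAddCommGroup F] [NormedSpace ℝ F] [FiniteDimensional ℝ F]

theorem ContinuousLinearMap.det_prodMap (A : E →L[ℝ] E) (B : F →L[ℝ] F) :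
    (A.prodMap B).det = A.det * B.det :=
  LinearMap.det_prodMap (A : E →ₗ[ℝ] E) (B : F →ₗ[ℝ] F)

theorem det_fderiv_prodMap {f : E → E} {g : F → F} {p : E × F}
    (hf : DifferentiableAt ℝ f p.1) (hg : DifferentiableAt ℝ g p.2) :
    (fderiv ℝ (Prod.map f g) p).det = (fderiv ℝ f p.1).det * (fderiv ℝ g p.2).det := by
  rw [(hf.hasFDerivAt.prodMap p hg.hasFDerivAt).fderiv, ContinuousLinearMap.det_prodMap]

theorem HasRegularZeros.prodMap {f : E → E} {g : F → F} (hfd : HasRegularZeros f)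
    (hgd : HasRegularZeros g) : HasRegularZeros (Prod.map f g) := by
  intro z hz
  rw [preimage_prodMap_zero] at hz
  obtain ⟨hf, hf_det⟩ := hfd z.1 hz.1
  obtain ⟨hg, hg_det⟩ := hgd z.2 hz.2
  exact ⟨hf.prodMap z hg, det_fderiv_prodMap hf hg ▸ mul_ne_zero hf_det hg_det⟩

theorem finsum_sign_det_fderiv_prodMap {f : E → E} {g : F → F}
    (hf : (f ⁻¹' {0}).Finite) (hg : (g ⁻¹' {0}).Finite)
    (hfd : ∀ x ∈ f ⁻¹' {0}, DifferentiableAt ℝ f x)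
    (hgd : ∀ y ∈ g ⁻¹' {0}, DifferentiableAt ℝ g y) :
    ∑ᶠ z ∈ Prod.map f g ⁻¹' {0}, Real.sign (fderiv ℝ (Prod.map f g) z).det =
      (∑ᶠ x ∈ f ⁻¹' {0}, Real.sign (fderiv ℝ f x).det) *
        ∑ᶠ y ∈ g ⁻¹' {0}, Real.sign (fderiv ℝ g y).det := by
  rw [finsum_mem_mul_finsum_mem hf hg, preimage_prodMap_zero]
  refine finsum_mem_congr rfl fun z hz => ?_
  rw [det_fderiv_prodMap (hfd z.1 hz.1) (hgd z.2 hz.2), Real.sign_mul]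

end ProductMap

/-- multiplicativity of the signed zero count (topological
degree at the regular value 0) for the product map `F(x,y) = (f x, g y)`. -/
theorem stmt_11 (m n : ℕ)
    (f : (Fin m → ℝ) → (Fin m → ℝ)) (g : (Fin n → ℝ) → (Fin n → ℝ))
    (hf : (f ⁻¹' {0}).Finite) (hg : (g ⁻¹' {0}).Finite)
    (hfd : ∀ x ∈ f ⁻¹' {0}, DifferentiableAt ℝ f x ∧ (fderiv ℝ f x).det ≠ 0)
    (hgd : ∀ y ∈ g ⁻¹' {0}, DifferentiableAt ℝ g y ∧ (fderiv ℝ g y).det ≠ 0) :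
    ((fun p : (Fin m → ℝ) × (Fin n → ℝ) => (f p.1, g p.2)) ⁻¹' {0} =
        (f ⁻¹' {0}) ×ˢ (g ⁻¹' {0})) ∧
    ((fun p : (Fin m → ℝ) × (Fin n → ℝ) => (f p.1, g p.2)) ⁻¹' {0}).Finite ∧
    (∀ z ∈ (fun p : (Fin m → ℝ) × (Fin n → ℝ) => (f p.1, g p.2)) ⁻¹' {0},
      DifferentiableAt ℝ (fun p : (Fin m → ℝ) × (Fin n → ℝ) => (f p.1, g p.2)) z ∧
      (fderiv ℝ (fun p : (Fin m → ℝ) × (Fin n → ℝ) => (f p.1, g p.2)) z).det ≠ 0) ∧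
    (∑ᶠ z ∈ (fun p : (Fin m → ℝ) × (Fin n → ℝ) => (f p.1, g p.2)) ⁻¹' {0},
        Real.sign ((fderiv ℝ (fun p : (Fin m → ℝ) × (Fin n → ℝ) => (f p.1, g p.2)) z).det)) =
      (∑ᶠ x ∈ f ⁻¹' {0}, Real.sign ((fderiv ℝ f x).det)) *
        (∑ᶠ y ∈ g ⁻¹' {0}, Real.sign ((fderiv ℝ g y).det)) := by
  have hzeros := preimage_prodMap_zero f g
  refine ⟨hzeros, hzeros ▸ hf.prod hg, HasRegularZeros.prodMap hfd hgd, ?_⟩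
  exact finsum_sign_det_fderiv_prodMap hf hg (fun x hx => (hfd x hx).1) fun y hy => (hgd y hy).1
end

section
/- Let η > 0, μ > 0 and Δ ≠ 0 be real numbers, and let g : ℝ → ℝ be differentiable with g(x) ≥ 1 for all x and g ≡ 1 on some neighborhood of 0. Define ρ : ℝ² → ℝ² by ρ(ξ, x) = (η ξ² − μ g(x)², Δ ξ x). Then the zero set of ρ is exactly {(√(μ/η), 0), (−√(μ/η), 0)}, at each zero the derivative Dρ is invertible with det Dρ = 2ηΔξ², and Σ_{z ∈ ρ⁻¹({0})} sign(det Dρ(z)) = 2·sign(Δ). If instead μ < 0 (with η > 0, Δ ≠ 0), then ρ has no zeros in ℝ². -/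
/-!
Since `Δ ≠ 0` and `g` never vanishes, the second component `Δ ξ x` of `ρ(ξ, x)` forces `x = 0`,
where `g = 1`, and the first one then reads `η ξ² = μ`. Near the axis `x = 0` the map is
`(ξ, x) ↦ (η ξ² - μ, Δ ξ x)`, whose derivative at `(ξ, 0)` is diagonal with determinant
`2ηΔξ² = 2μΔ` at both zeros, so each zero contributes `sign Δ`.
-/

/-- The vector field `ρ(ξ,x) = (η ξ² - μ g(x)², Δ ξ x)` of the regularized 1d
superconductor with a domain wall in the order parameter. -/
noncomputable def rho14 (η μ Δ : ℝ) (g : ℝ → ℝ) : ℝ × ℝ → ℝ × ℝ :=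
  fun q => (η * q.1 ^ 2 - μ * g q.2 ^ 2, Δ * q.1 * q.2)

open ContinuousLinearMap

lemma Real.sign_mul_of_pos {c : ℝ} (hc : 0 < c) (r : ℝ) : Real.sign (c * r) = Real.sign r := by
  rcases lt_trichotomy r 0 with hr | rfl | hr
  · rw [Real.sign_of_neg hr, Real.sign_of_neg (mul_neg_of_pos_of_neg hc hr)]
  · rw [mul_zero]
  · rw [Real.sign_of_pos hr, Real.sign_of_pos (mul_pos hc hr)]

lemma ContinuousLinearMap.det_smul_fst_prod_smul_snd (c d : ℝ) :
    ((c • fst ℝ ℝ ℝ).prod (d • snd ℝ ℝ ℝ)).det = c * d := by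
  rw [ContinuousLinearMap.det, ← LinearMap.det_toMatrix (Module.Basis.finTwoProd ℝ),
    Matrix.det_fin_two]
  simp [LinearMap.toMatrix_apply, Module.Basis.finTwoProd]

section Rho

variable {η μ Δ : ℝ} {g : ℝ → ℝ}

lemma rho14_eq_zero_iff (hμ : μ ≠ 0) (hΔ : Δ ≠ 0) (hg : ∀ x, g x ≠ 0) (q : ℝ × ℝ) :
    rho14 η μ Δ g q = 0 ↔ q.2 = 0 ∧ η * q.1 ^ 2 = μ * g 0 ^ 2 := by
  simp only [rho14, Prod.ext_iff, Prod.fst_zero, Prod.snd_zero, sub_eq_zero]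
  constructor
  · rintro ⟨hfst, hsnd⟩
    have hq2 : q.2 = 0 := by
      rcases mul_eq_zero.mp hsnd with hq1 | hq2
      · have hq1 : q.1 = 0 := (mul_eq_zero.mp hq1).resolve_left hΔ
        rw [hq1] at hfst
        exact absurd (by simpa using hfst.symm) (mul_ne_zero hμ (pow_ne_zero 2 (hg q.2)))
      · exact hq2
    exact ⟨hq2, hq2 ▸ hfst⟩
  · rintro ⟨hq2, hfst⟩
    exact ⟨hq2 ▸ hfst, by rw [hq2, mul_zero]⟩

lemma rho14_preimage_zero (hη : 0 < η) (hμ : 0 < μ) (hΔ : Δ ≠ 0) (hg : ∀ x, g x ≠ 0)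
    (hg0 : g 0 = 1) :
    rho14 η μ Δ g ⁻¹' {0} = {(√(μ / η), 0), (-√(μ / η), 0)} := by
  ext q
  have hsq : q.1 ^ 2 = √(μ / η) ^ 2 ↔ η * q.1 ^ 2 = μ * g 0 ^ 2 := by
    rw [Real.sq_sqrt (div_pos hμ hη).le, hg0, one_pow, mul_one, eq_div_iff hη.ne', mul_comm]
  simp only [Set.mem_preimage, Set.mem_singleton_iff, rho14_eq_zero_iff hμ.ne' hΔ hg,
    ← hsq, sq_eq_sq_iff_eq_or_eq_neg, Set.mem_insert_iff, Prod.ext_iff]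
  tauto

lemma rho14_preimage_zero_of_neg (hη : 0 ≤ η) (hμ : μ < 0) (hg : ∀ x, g x ≠ 0) :
    rho14 η μ Δ g ⁻¹' {0} = ∅ := by
  refine Set.eq_empty_of_forall_notMem fun q hq => ?_
  have hfst : η * q.1 ^ 2 - μ * g q.2 ^ 2 = 0 := congrArg Prod.fst hq
  have : 0 < -μ * g q.2 ^ 2 := mul_pos (neg_pos.mpr hμ) (by have := hg q.2; positivity)
  nlinarith [mul_nonneg hη (sq_nonneg q.1)]

lemma rho14_hasFDerivAt (hgloc : ∀ᶠ x in nhds 0, g x = 1) (a : ℝ) :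
    HasFDerivAt (rho14 η μ Δ g)
      (((2 * η * a) • fst ℝ ℝ ℝ).prod ((Δ * a) • snd ℝ ℝ ℝ)) (a, 0) := by
  have hfst : HasFDerivAt (fun q : ℝ × ℝ => η * q.1 ^ 2 - μ)
      ((2 * η * a) • fst ℝ ℝ ℝ) (a, 0) :=
    (((hasFDerivAt_fst.pow 2).const_mul η).sub_const μ).congr_fderiv (by ext <;> simp; ring)
  have hsnd : HasFDerivAt (fun q : ℝ × ℝ => Δ * q.1 * q.2) ((Δ * a) • snd ℝ ℝ ℝ) (a, 0) :=
    ((hasFDerivAt_fst.const_mul Δ).mul hasFDerivAt_snd).congr_fderiv (by ext <;> simp)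
  refine (hfst.prodMk hsnd).congr_of_eventuallyEq ?_
  filter_upwards [continuous_snd.continuousAt.eventually hgloc] with q hq
  simp [rho14, hq]

lemma rho14_fderiv_det (hgloc : ∀ᶠ x in nhds 0, g x = 1) (a : ℝ) :
    (fderiv ℝ (rho14 η μ Δ g) (a, 0)).det = 2 * η * Δ * a ^ 2 := by
  rw [(rho14_hasFDerivAt hgloc a).fderiv, det_smul_fst_prod_smul_snd]
  ring

end Rho

theorem stmt_14_general (η μ Δ : ℝ) (hη : 0 < η) (hΔ : Δ ≠ 0)
    (g : ℝ → ℝ) (hg1 : ∀ x, 1 ≤ g x)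
    (hgloc : ∀ᶠ x in nhds (0 : ℝ), g x = 1) :
    (0 < μ →
      (rho14 η μ Δ g ⁻¹' {0} =
        {(Real.sqrt (μ / η), 0), (-Real.sqrt (μ / η), 0)}) ∧
      (∀ z ∈ rho14 η μ Δ g ⁻¹' {0},
        DifferentiableAt ℝ (rho14 η μ Δ g) z ∧
        (fderiv ℝ (rho14 η μ Δ g) z).det = 2 * η * Δ * z.1 ^ 2 ∧
        (fderiv ℝ (rho14 η μ Δ g) z).det ≠ 0) ∧
      (∑ᶠ z ∈ rho14 η μ Δ g ⁻¹' {0},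
          Real.sign ((fderiv ℝ (rho14 η μ Δ g) z).det)) = 2 * Real.sign Δ) ∧
    (μ < 0 → rho14 η μ Δ g ⁻¹' {0} = ∅) := by
  have hg0 : g 0 = 1 := hgloc.self_of_nhds
  have hg : ∀ x, g x ≠ 0 := fun x => (zero_lt_one.trans_le (hg1 x)).ne'
  refine ⟨fun hμ => ?_, fun hμ => rho14_preimage_zero_of_neg hη.le hμ hg⟩
  rw [rho14_preimage_zero hη hμ hΔ hg hg0]
  have hsq : √(μ / η) ^ 2 = μ / η := Real.sq_sqrt (div_pos hμ hη).le
  have hdet : ∀ a : ℝ, a ^ 2 = μ / η → (fderiv ℝ (rho14 η μ Δ g) (a, 0)).det = 2 * μ * Δ := by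
    intro a ha
    rw [rho14_fderiv_det hgloc, ha]
    field_simp
  have hne : ((√(μ / η), 0) : ℝ × ℝ) ≠ (-√(μ / η), 0) := fun h => by
    linarith [congrArg Prod.fst h, Real.sqrt_pos.mpr (div_pos hμ hη)]
  refine ⟨rfl, ?_, ?_⟩
  · rintro z (rfl | rfl) <;>
      refine ⟨(rho14_hasFDerivAt hgloc _).differentiableAt, rho14_fderiv_det hgloc _, ?_⟩ <;>
      rw [hdet _ (by simpa using hsq)] <;> positivity
  · rw [finsum_mem_pair hne, hdet _ hsq, hdet _ (by simpa using hsq), mul_assoc,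
      Real.sign_mul_of_pos two_pos, Real.sign_mul_of_pos hμ]
    ring

/-- for `η > 0`, `μ > 0`, `Δ ≠ 0` and `g ≥ 1` differentiable
with `g ≡ 1` near `0`, the zero set of `ρ` is `{(±√(μ/η), 0)}`, the Jacobian
determinant there is `2ηΔξ² ≠ 0`, and the signed zero count is `2 sign Δ`;
for `μ < 0` the map `ρ` has no zeros. -/
theorem stmt_14 (η μ Δ : ℝ) (hη : 0 < η) (hΔ : Δ ≠ 0)
    (g : ℝ → ℝ) (hgdiff : Differentiable ℝ g) (hg1 : ∀ x, 1 ≤ g x)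
    (hgloc : ∀ᶠ x in nhds (0 : ℝ), g x = 1) :
    (0 < μ →
      (rho14 η μ Δ g ⁻¹' {0} =
        {(Real.sqrt (μ / η), 0), (-Real.sqrt (μ / η), 0)}) ∧
      (∀ z ∈ rho14 η μ Δ g ⁻¹' {0},
        DifferentiableAt ℝ (rho14 η μ Δ g) z ∧
        (fderiv ℝ (rho14 η μ Δ g) z).det = 2 * η * Δ * z.1 ^ 2 ∧
        (fderiv ℝ (rho14 η μ Δ g) z).det ≠ 0) ∧
      (∑ᶠ z ∈ rho14 η μ Δ g ⁻¹' {0},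
          Real.sign ((fderiv ℝ (rho14 η μ Δ g) z).det)) = 2 * Real.sign Δ) ∧
    (μ < 0 → rho14 η μ Δ g ⁻¹' {0} = ∅) :=
  stmt_14_general η μ Δ hη hΔ g hg1 hgloc
end

section
/- Let μ ≠ 0 and Δ ≠ 0 be real numbers and let h : ℝ → ℝ be differentiable at 0 with h(0) = 0. Define ρ : ℝ² → ℝ² by ρ(ξ, x) = (h(ξ) − μ x, Δ ξ). Then the zero set of ρ is exactly {(0, 0)}, the derivative Dρ(0,0) is invertible with det Dρ(0,0) = μΔ, and Σ_{z ∈ ρ⁻¹({0})} sign(det Dρ(z)) = sign(μΔ). -/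
noncomputable def rho15 (μ Δ : ℝ) (h : ℝ → ℝ) : ℝ × ℝ → ℝ × ℝ :=
  fun q => (h q.1 - μ * q.2, Δ * q.1)

open ContinuousLinearMap

section rho15

variable (μ Δ : ℝ) (h : ℝ → ℝ)

/-- The Jacobian of `rho15 μ Δ h` at a point where `h' = a`: the matrix `[[a, -μ], [Δ, 0]]`. -/
noncomputable def rho15Linearization (a : ℝ) : ℝ × ℝ →L[ℝ] ℝ × ℝ :=
  (a • fst ℝ ℝ ℝ - μ • snd ℝ ℝ ℝ).prod (Δ • fst ℝ ℝ ℝ)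

theorem hasFDerivAt_rho15 {a : ℝ} {q : ℝ × ℝ} (hh : HasDerivAt h a q.1) :
    HasFDerivAt (rho15 μ Δ h) (rho15Linearization μ Δ a) q := by
  have hfirst : HasFDerivAt (fun q : ℝ × ℝ => h q.1) (a • fst ℝ ℝ ℝ) q := by
    refine (hh.hasFDerivAt.comp q hasFDerivAt_fst).congr_fderiv ?_
    ext <;> simp [mul_comm]
  exact (hfirst.sub ((hasFDerivAt_snd).const_smul μ)).prodMk ((hasFDerivAt_fst).const_smul Δ)

theorem det_rho15Linearization (a : ℝ) : (rho15Linearization μ Δ a).det = μ * Δ := by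
  rw [ContinuousLinearMap.det, ← LinearMap.det_toMatrix (Module.Basis.finTwoProd ℝ),
    Matrix.det_fin_two]
  simp [LinearMap.toMatrix_apply, rho15Linearization]

variable {μ Δ h}

theorem rho15_preimage_zero (hμ : μ ≠ 0) (hΔ : Δ ≠ 0) (h0 : h 0 = 0) :
    rho15 μ Δ h ⁻¹' {0} = {(0, 0)} := by
  ext ⟨ξ, x⟩
  simp only [Set.mem_preimage, Set.mem_singleton_iff, rho15, Prod.mk_eq_zero, Prod.mk.injEq]
  constructor
  · rintro ⟨hfirst, hsecond⟩
    obtain rfl : ξ = 0 := (mul_eq_zero.mp hsecond).resolve_left hΔ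
    rw [h0, zero_sub, neg_eq_zero] at hfirst
    exact ⟨rfl, (mul_eq_zero.mp hfirst).resolve_left hμ⟩
  · rintro ⟨rfl, rfl⟩
    simp [h0]

end rho15

/-- for `μ ≠ 0`, `Δ ≠ 0` and `h` differentiable at `0` with
`h 0 = 0`, the zero set of `ρ` is `{(0,0)}`, the derivative there is invertible
with Jacobian determinant `μΔ`, and the signed zero count is `sign (μΔ)`. -/
theorem stmt_15 (μ Δ : ℝ) (hμ : μ ≠ 0) (hΔ : Δ ≠ 0) (h : ℝ → ℝ)
    (hdiff : DifferentiableAt ℝ h 0) (h0 : h 0 = 0) :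
    (rho15 μ Δ h ⁻¹' {0} = {(0, 0)}) ∧
    DifferentiableAt ℝ (rho15 μ Δ h) (0, 0) ∧
    (fderiv ℝ (rho15 μ Δ h) (0, 0)).det = μ * Δ ∧
    (fderiv ℝ (rho15 μ Δ h) (0, 0)).det ≠ 0 ∧
    (∑ᶠ z ∈ rho15 μ Δ h ⁻¹' {0}, Real.sign ((fderiv ℝ (rho15 μ Δ h) z).det)) =
      Real.sign (μ * Δ) := by
  have hderiv := hasFDerivAt_rho15 μ Δ h (q := (0, 0)) hdiff.hasDerivAt
  have hdet : (fderiv ℝ (rho15 μ Δ h) (0, 0)).det = μ * Δ := by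
    rw [hderiv.fderiv, det_rho15Linearization]
  have hzeros := rho15_preimage_zero hμ hΔ h0
  refine ⟨hzeros, hderiv.differentiableAt, hdet, hdet ▸ mul_ne_zero hμ hΔ, ?_⟩
  rw [hzeros, finsum_mem_singleton, hdet]
end
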